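/- arXiv:2503.04125 — 3 statements merged into one kernel-verified Lean document; each statement's English description precedes it below -/
import Mathlib

section
/- Let A be a finite-dimensional bialgebra with basis {c_i}, structure constants F = G, unit u(1) = Σ_i λ_i c_i, and counit ε(c_i) = μ_i. Define ⁱF_{ij}^k = Σ_{i',j',k'} F^j_{i'k'} F^i_{k'j'} F^k_{j'i'}. Then u(1) is a two-sided unit for the ⋄-multiplication, i.e., Σ_j λ_j ⁱF_{ij}^k = δ_{ik} and Σ_i λ_i ⁱF_{ij}^k = δ_{jk} for all i,j,k. -/
/-- In the case `F = G`, the unit `u(1) = ∑ λ_i c_i` of the bialgebra is also a two-sided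
unit for the `ı`-multiplication: `∑ j, λ j * ⁱF i j p = δ_{ip}` and
`∑ i, λ i * ⁱF i j p = δ_{jp}`. -/
theorem iHopf_unit_FeqG {k : Type*} [Field k] {I : Type*} [Fintype I] [DecidableEq I]
    (F : I → I → I → k) (lam mu : I → k)
    (hcounit : ∀ i j, (∑ m, F i j m * mu m) = mu i * mu j)
    (hunitco : ∀ i j, (∑ m, F i j m * lam m) = lam i * lam j)
    (hunitl : ∀ j p, (∑ i, lam i * F i j p) = if j = p then (1 : k) else 0)
    (hunitr : ∀ i p, (∑ j, lam j * F i j p) = if i = p then (1 : k) else 0)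
    (iF : I → I → I → k)
    (hiF : ∀ i j m, iF i j m = ∑ i', ∑ j', ∑ k', F i' k' j * F k' j' i * F j' i' m) :
    (∀ i p, (∑ j, lam j * iF i j p) = if i = p then (1 : k) else 0) ∧
    (∀ j p, (∑ i, lam i * iF i j p) = if j = p then (1 : k) else 0) := by
  constructor
  · intro i p
    calc ∑ j, lam j * iF i j p
        = ∑ i', ∑ j', ∑ k', (lam i' * lam k') * (F k' j' i * F j' i' p) := by
          simp only [hiF, Finset.mul_sum]
          rw [Finset.sum_comm]
          refine Finset.sum_congr rfl fun i' _ => ?_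
          rw [Finset.sum_comm]
          refine Finset.sum_congr rfl fun j' _ => ?_
          rw [Finset.sum_comm]
          refine Finset.sum_congr rfl fun k' _ => ?_
          calc ∑ j, lam j * (F i' k' j * F k' j' i * F j' i' p)
              = (F k' j' i * F j' i' p) * ∑ m, F i' k' m * lam m := by
                rw [Finset.mul_sum]; exact Finset.sum_congr rfl fun m _ => by ring
            _ = (lam i' * lam k') * (F k' j' i * F j' i' p) := by
                rw [hunitco]; ring
      _ = ∑ i', ∑ j', (lam i' * F j' i' p) * (if j' = i then 1 else 0) := by
          refine Finset.sum_congr rfl fun i' _ => Finset.sum_congr rfl fun j' _ => ?_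
          calc ∑ k', (lam i' * lam k') * (F k' j' i * F j' i' p)
              = (lam i' * F j' i' p) * ∑ k', lam k' * F k' j' i := by
                rw [Finset.mul_sum]; exact Finset.sum_congr rfl fun k' _ => by ring
            _ = _ := by rw [hunitl j' i]
      _ = ∑ i', lam i' * F i i' p := by
          refine Finset.sum_congr rfl fun i' _ => ?_
          simp [mul_ite]
      _ = if i = p then 1 else 0 := hunitr i p
  · intro j p
    calc ∑ i, lam i * iF i j p
        = ∑ i', ∑ j', ∑ k', F i' k' j * (lam k' * lam j') * F j' i' p := by
          simp only [hiF, Finset.mul_sum]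
          rw [Finset.sum_comm]
          refine Finset.sum_congr rfl fun i' _ => ?_
          rw [Finset.sum_comm]
          refine Finset.sum_congr rfl fun j' _ => ?_
          rw [Finset.sum_comm]
          refine Finset.sum_congr rfl fun k' _ => ?_
          calc ∑ i, lam i * (F i' k' j * F k' j' i * F j' i' p)
              = (F i' k' j * F j' i' p) * ∑ m, F k' j' m * lam m := by
                rw [Finset.mul_sum]; exact Finset.sum_congr rfl fun m _ => by ring
            _ = F i' k' j * (lam k' * lam j') * F j' i' p := by rw [hunitco]; ring
      _ = ∑ i', (∑ j', lam j' * F j' i' p) * (if i' = j then 1 else 0) := by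
          refine Finset.sum_congr rfl fun i' _ => ?_
          rw [Finset.sum_mul]
          refine Finset.sum_congr rfl fun j' _ => ?_
          calc ∑ k', F i' k' j * (lam k' * lam j') * F j' i' p
              = (lam j' * F j' i' p) * ∑ k', lam k' * F i' k' j := by
                rw [Finset.mul_sum]; exact Finset.sum_congr rfl fun k' _ => by ring
            _ = _ := by rw [hunitr i' j]
      _ = ∑ j', lam j' * F j' j p := by
          simp [mul_ite, mul_one, mul_zero, Finset.sum_ite_eq']
      _ = if j = p then 1 else 0 := hunitl j p
end

section
/- Let A and A* be bialgebras with A* the dual bialgebra of A (finite-dimensional), and let φ: A → A* be a linear map with φ = φ* (where φ*(a)(b) = φ(b)(a)). If φ is an isomorphism of algebras, then φ is also an isomorphism of coalgebras. -/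
/-- Proposition 4.1: let `A` be a bialgebra with structure constants `F` (multiplication)
and `G` (comultiplication), and `A*` its dual bialgebra (multiplication `G`, comultiplication
`F` in the dual basis). If `φ : A → A*` has symmetric representation matrix `S`
(i.e. `φ = φ*`) and `φ` is an isomorphism of algebras, then `φ` is an isomorphism of
coalgebras: `Δ_{A*}(φ a) = (φ ⊗ φ)(Δ_A a)`. -/
theorem selfDual_algIso_is_coalgIso {k : Type*} [Field k] {I : Type*} [Fintype I]
    [DecidableEq I] (F G : I → I → I → k) (S : Matrix I I k)
    (hsymm : S.transpose = S)
    (φ : (I → k) → (I → k)) (hφ : ∀ a j, φ a j = ∑ i, S j i * a i)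
    (hbij : Function.Bijective φ)
    (mulF mulG : (I → k) → (I → k) → (I → k))
    (hmulF : ∀ a b p, mulF a b p = ∑ i, ∑ j, a i * b j * F i j p)
    (hmulG : ∀ a b p, mulG a b p = ∑ i, ∑ j, a i * b j * G i j p)
    (halg : ∀ a b, φ (mulF a b) = mulG (φ a) (φ b)) :
    ∀ (a : I → k) (i j : I),
      (∑ m, φ a m * F i j m) = ∑ p, ∑ q, S i p * S j q * (∑ m, a m * G p q m) := by
  intro a i j
  classical
  have hS : ∀ m n, S m n = S n m := by
    intro m n
    simpa using congrFun (congrFun hsymm n) m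
  set e : I → I → k := fun i m => if m = i then (1 : k) else 0 with he
  have hφe : ∀ (i p : I), φ (e i) p = S p i := by
    intro i p
    rw [hφ]
    simp [he, mul_ite]
  have hmfe : ∀ p, mulF (e i) (e j) p = F i j p := by
    intro p
    rw [hmulF]
    simp [he, ite_mul]
  have key : ∀ n, ∑ m, S n m * F i j m = ∑ p, ∑ q, S p i * S q j * G p q n := by
    intro n
    have h := congrFun (halg (e i) (e j)) n
    rw [hφ, hmulG] at h
    simp only [hmfe, hφe] at h
    exact h
  calc ∑ m, φ a m * F i j m
      = ∑ m, ∑ n, S m n * a n * F i j m := by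
        simp only [hφ, Finset.sum_mul]
    _ = ∑ n, a n * ∑ m, S n m * F i j m := by
        rw [Finset.sum_comm]
        refine Finset.sum_congr rfl fun n _ => ?_
        rw [Finset.mul_sum]
        refine Finset.sum_congr rfl fun m _ => ?_
        rw [hS m n]; ring
    _ = ∑ n, a n * ∑ p, ∑ q, S p i * S q j * G p q n := by
        simp only [key]
    _ = ∑ p, ∑ q, S i p * S j q * (∑ m, a m * G p q m) := by
        simp only [Finset.mul_sum]
        rw [Finset.sum_comm]
        refine Finset.sum_congr rfl fun p _ => ?_
        rw [Finset.sum_comm]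
        refine Finset.sum_congr rfl fun q _ => ?_
        refine Finset.sum_congr rfl fun n _ => ?_
        rw [hS p i, hS q j]; ring
end

section
/- Let k be an algebraically closed field (char ≠ 2). The ıTaft algebra H₂ⁱ(q), the 4-dimensional commutative algebra with basis d₁,d₂,d₃,d₄, unit d₁, and relations d₂⋄d₂ = −d₁, d₃⋄d₃ = d₂, d₂⋄d₃ = −d₄, d₂⋄d₄ = d₃, d₃⋄d₄ = d₁, d₄⋄d₄ = −d₂, is isomorphic as a k-algebra to the group algebra k[ℤ/4ℤ]. Explicitly, if v ∈ k satisfies v⁴ = −1, then v·d₃ generates H₂ⁱ(q) with (v d₃)⁴ = d₁. -/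
/-!
With `x = d₃` the table says `d₂ = x²`, `d₄ = -x³` and `x⁴ = -d₁`, so `H₂ⁱ(q) ≅ k[x]/(x⁴ + 1)`,
while `k[ℤ/4ℤ] = k[X]/(X⁴ - 1)`. If `u⁴ = -1`, then `x ↦ uX` identifies the two: it sends the
basis `d₁, d₂, d₃, d₄` to nonzero multiples of the distinct group elements `0, 2, 1, 3`, and it
respects the table because `(uX)⁴ = -1`. Rescaling `d₃` by `v` with `v⁴ = -1` likewise gives
`(v d₃)⁴ = v⁴ d₃⁴ = d₁`.
-/

/-- Basis vector `d_{i+1}` of the `ı`Taft algebra, in coordinates. -/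
def iTaftBasis (k : Type*) [Field k] (i : Fin 4) : Fin 4 → k := Pi.single i 1

/-- The multiplication table of the `ı`Taft algebra `H₂ⁱ(q)` in the basis
`d₁, d₂, d₃, d₄` (indices `0,1,2,3`): `d₁` unit, `d₂⋄d₂ = -d₁`, `d₂⋄d₃ = -d₄`,
`d₂⋄d₄ = d₃`, `d₃⋄d₃ = d₂`, `d₃⋄d₄ = d₁`, `d₄⋄d₄ = -d₂` (commutative). -/
def iTaftTable (k : Type*) [Field k] : Fin 4 → Fin 4 → (Fin 4 → k) :=
  ![![iTaftBasis k 0, iTaftBasis k 1, iTaftBasis k 2, iTaftBasis k 3],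
    ![iTaftBasis k 1, -iTaftBasis k 0, -iTaftBasis k 3, iTaftBasis k 2],
    ![iTaftBasis k 2, -iTaftBasis k 3, iTaftBasis k 1, iTaftBasis k 0],
    ![iTaftBasis k 3, iTaftBasis k 2, iTaftBasis k 0, -iTaftBasis k 1]]

/-- The (bilinear) multiplication of the `ı`Taft algebra `H₂ⁱ(q)` in coordinates. -/
def iTaftMul (k : Type*) [Field k] (a b : Fin 4 → k) : Fin 4 → k :=
  fun p => ∑ i, ∑ j, a i * b j * iTaftTable k i j p

theorem LinearMap.map_sum_mul_sum_structureConst {R A ι : Type*} [CommSemiring R] [Semiring A]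
    [Algebra R A] [Fintype ι] [DecidableEq ι] (T : ι → ι → ι → R) (f : (ι → R) →ₗ[R] A)
    (hf : ∀ i j, f (T i j) = f (Pi.single i 1) * f (Pi.single j 1)) (a b : ι → R) :
    f (fun p => ∑ i, ∑ j, a i * b j * T i j p) = f a * f b := by
  have hsum : (fun p => ∑ i, ∑ j, a i * b j * T i j p) = ∑ i, ∑ j, (a i * b j) • T i j := by
    ext p; simp [Finset.sum_apply]
  rw [hsum]
  conv_rhs => rw [pi_eq_sum_univ' a, pi_eq_sum_univ' b]
  simp only [map_sum, map_smul, hf, Finset.sum_mul_sum, smul_mul_smul_comm]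

theorem AddMonoidAlgebra.linearIndependent_single_comp {k G ι : Type*} [DivisionRing k]
    {σ : ι → G} (hσ : Function.Injective σ) {c : ι → k} (hc : ∀ i, c i ≠ 0) :
    LinearIndependent k fun i => AddMonoidAlgebra.single (σ i) (c i) := by
  convert ((AddMonoidAlgebra.basis G k).linearIndependent.comp σ hσ).units_smul
    (fun i => Units.mk0 (c i) (hc i)) with i
  simp [AddMonoidAlgebra.smul_single]

namespace iTaft

variable {k : Type*} [Field k]

theorem basis_mul_basis (i j : Fin 4) :
    iTaftMul k (iTaftBasis k i) (iTaftBasis k j) = iTaftTable k i j := by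
  funext p
  simp [iTaftMul, iTaftBasis, Pi.single_apply]

theorem smul_mul_smul (r s : k) (a b : Fin 4 → k) :
    iTaftMul k (r • a) (s • b) = (r * s) • iTaftMul k a b := by
  funext p
  simp only [iTaftMul, Pi.smul_apply, smul_eq_mul, Finset.mul_sum]
  congr! 2; ring

theorem smul_basis_two_pow_four {v : k} (hv : v ^ 4 = -1) :
    iTaftMul k (iTaftMul k (iTaftMul k (v • iTaftBasis k 2) (v • iTaftBasis k 2))
        (v • iTaftBasis k 2)) (v • iTaftBasis k 2) = iTaftBasis k 0 := by
  have hsq : iTaftMul k (v • iTaftBasis k 2) (v • iTaftBasis k 2) = (v * v) • iTaftBasis k 1 := by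
    rw [smul_mul_smul, basis_mul_basis]; rfl
  have hcube : iTaftMul k ((v * v) • iTaftBasis k 1) (v • iTaftBasis k 2) =
      (-(v * v * v)) • iTaftBasis k 3 := by
    rw [smul_mul_smul, basis_mul_basis, neg_smul, ← smul_neg]; rfl
  rw [hsq, hcube, smul_mul_smul, basis_mul_basis]
  calc (-(v * v * v) * v) • iTaftTable k 3 2 = (1 : k) • iTaftBasis k 0 := by
        congr 1; linear_combination -hv
    _ = iTaftBasis k 0 := one_smul k _

theorem map_iTaftMul {A : Type*} [CommRing A] [Algebra k A] (f : (Fin 4 → k) →ₗ[k] A)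
    {x : A} (hx : x ^ 4 = -1) (hf : ∀ i, f (iTaftBasis k i) = ![1, x ^ 2, x, -x ^ 3] i)
    (a b : Fin 4 → k) : f (iTaftMul k a b) = f a * f b := by
  refine f.map_sum_mul_sum_structureConst _ (fun i j => ?_) a b
  change f (iTaftTable k i j) = f (iTaftBasis k i) * f (iTaftBasis k j)
  fin_cases i <;> fin_cases j <;>
    simp only [Fin.zero_eta, Fin.mk_one, Fin.reduceFinMk, iTaftTable, map_neg, hf,
      Matrix.cons_val]
  all_goals first
    | ring1
    | linear_combination -hx
    | linear_combination hx
    | linear_combination x * hx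
    | linear_combination -x ^ 2 * hx

noncomputable def groupAlgebraBasis (u : k) (i : Fin 4) : AddMonoidAlgebra k (ZMod 4) :=
  AddMonoidAlgebra.single (![0, 2, 1, 3] i) (![1, u ^ 2, u, -u ^ 3] i)

theorem groupAlgebraBasis_eq_pow (u : k) :
    groupAlgebraBasis u = ![1, AddMonoidAlgebra.single 1 u ^ 2, AddMonoidAlgebra.single 1 u,
      -AddMonoidAlgebra.single 1 u ^ 3] := by
  funext i
  fin_cases i <;> simp [groupAlgebraBasis, AddMonoidAlgebra.single_pow, AddMonoidAlgebra.one_def]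

theorem linearIndependent_groupAlgebraBasis {u : k} (hu : u ≠ 0) :
    LinearIndependent k (groupAlgebraBasis u) :=
  AddMonoidAlgebra.linearIndependent_single_comp (by decide) fun i => by
    fin_cases i <;> simp [hu]

noncomputable def equivGroupAlgebra {u : k} (hu : u ≠ 0) :
    (Fin 4 → k) ≃ₗ[k] AddMonoidAlgebra k (ZMod 4) :=
  (Pi.basisFun k (Fin 4)).equiv
    (basisOfLinearIndependentOfCardEqFinrank (linearIndependent_groupAlgebraBasis hu)
      (by simp [Module.finrank_eq_card_basis (AddMonoidAlgebra.basis (ZMod 4) k)]))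
    (Equiv.refl _)

theorem equivGroupAlgebra_iTaftBasis {u : k} (hu : u ≠ 0) (i : Fin 4) :
    equivGroupAlgebra hu (iTaftBasis k i) = groupAlgebraBasis u i := by
  rw [iTaftBasis, ← Pi.basisFun_apply, equivGroupAlgebra, Module.Basis.equiv_apply,
    coe_basisOfLinearIndependentOfCardEqFinrank, Equiv.refl_apply]

theorem single_one_pow_four {u : k} (hu : u ^ 4 = -1) :
    AddMonoidAlgebra.single (1 : ZMod 4) u ^ 4 = -1 := by
  rw [AddMonoidAlgebra.single_pow, hu, AddMonoidAlgebra.single_neg, AddMonoidAlgebra.one_def]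
  rfl

end iTaft

theorem iTaft_iso_group_algebra_general (k : Type*) [Field k] [IsAlgClosed k] :
    (∃ f : (Fin 4 → k) ≃ₗ[k] AddMonoidAlgebra k (ZMod 4),
      (∀ a b, f (iTaftMul k a b) = f a * f b) ∧ f (iTaftBasis k 0) = 1) ∧
    (∀ v : k, v ^ 4 = -1 →
      iTaftMul k (iTaftMul k (iTaftMul k (v • iTaftBasis k 2) (v • iTaftBasis k 2))
        (v • iTaftBasis k 2)) (v • iTaftBasis k 2) = iTaftBasis k 0) := by
  obtain ⟨u, hu⟩ := IsAlgClosed.exists_pow_nat_eq (-1 : k) (n := 4) (by norm_num)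
  have hu0 : u ≠ 0 := by rintro rfl; norm_num at hu
  have hbasis (i : Fin 4) : iTaft.equivGroupAlgebra hu0 (iTaftBasis k i) =
      ![1, AddMonoidAlgebra.single 1 u ^ 2, AddMonoidAlgebra.single 1 u,
        -AddMonoidAlgebra.single 1 u ^ 3] i := by
    rw [iTaft.equivGroupAlgebra_iTaftBasis, iTaft.groupAlgebraBasis_eq_pow]
  refine ⟨⟨iTaft.equivGroupAlgebra hu0, ?_, hbasis 0⟩,
    fun v hv => iTaft.smul_basis_two_pow_four hv⟩
  exact iTaft.map_iTaftMul (iTaft.equivGroupAlgebra hu0).toLinearMap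
    (iTaft.single_one_pow_four hu) hbasis

/-- Proposition 5.2: over an algebraically closed field (char ≠ 2), the `ı`Taft algebra
`H₂ⁱ(q)` is isomorphic to the group algebra of `ℤ/4ℤ`: there is a linear equivalence
intertwining multiplications and units; explicitly, any `v` with `v⁴ = -1` gives
`(v • d₃)⁴ = d₁`. -/
theorem iTaft_iso_group_algebra (k : Type*) [Field k] [IsAlgClosed k] (h2 : (2 : k) ≠ 0) :
    (∃ f : (Fin 4 → k) ≃ₗ[k] AddMonoidAlgebra k (ZMod 4),
      (∀ a b, f (iTaftMul k a b) = f a * f b) ∧ f (iTaftBasis k 0) = 1) ∧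
    (∀ v : k, v ^ 4 = -1 →
      iTaftMul k (iTaftMul k (iTaftMul k (v • iTaftBasis k 2) (v • iTaftBasis k 2))
        (v • iTaftBasis k 2)) (v • iTaftBasis k 2) = iTaftBasis k 0) :=
  iTaft_iso_group_algebra_general k
end
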